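/- arXiv:1106.2680 — 2 statements merged into one kernel-verified Lean document; each statement's English description precedes it below -/
import Mathlib

section
/- Every proper ideal I of Z consists of elements whose cube is zero: for every ideal I ≠ Z of Z and every a ∈ I, one has a³ = 0. -/
/-!
Since `D` satisfies the Leibniz rule, `D (a ^ 3) = 3 • a ^ 2 • D a = 0` in characteristic 3.
Hence `a ^ 3` is a constant of `D`, so the principal ideal it generates is `D`-invariant; lying
inside the proper ideal `I`, that ideal is not `Z`, so it is `0`.
-/

namespace Derivation

variable {R A : Type*} [CommSemiring R] [CommSemiring A] [Algebra R A]

theorem map_pow_char_eq_zero {M : Type*} [AddCommMonoid M] [Module A M] [Module R M]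
    [IsScalarTower R A M] (D : Derivation R A M) (p : ℕ) [CharP R p] (a : A) :
    D (a ^ p) = 0 := by
  rw [leibniz_pow, ← Nat.cast_smul_eq_nsmul R, CharP.cast_eq_zero, zero_smul]

theorem map_mem_span_singleton_of_map_eq_zero (D : Derivation R A A) {c x : A} (hc : D c = 0)
    (hx : x ∈ Ideal.span {c}) : D x ∈ Ideal.span {c} := by
  obtain ⟨y, rfl⟩ := Ideal.mem_span_singleton'.mp hx
  rw [leibniz, hc, smul_zero, zero_add, smul_eq_mul]
  exact Ideal.mul_mem_right _ _ (Ideal.mem_span_singleton_self c)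

theorem eq_zero_of_map_eq_zero_of_mem (D : Derivation R A A)
    (hsimple : ∀ I : Ideal A, (∀ x ∈ I, D x ∈ I) → I = ⊥ ∨ I = ⊤)
    {I : Ideal A} (hI : I ≠ ⊤) {c : A} (hcI : c ∈ I) (hc : D c = 0) : c = 0 := by
  rcases hsimple _ fun _ ↦ D.map_mem_span_singleton_of_map_eq_zero hc with hbot | htop
  · exact Ideal.span_singleton_eq_bot.mp hbot
  · exact absurd (top_le_iff.mp (htop ▸ (Ideal.span_singleton_le_iff_mem I).mpr hcI)) hI

end Derivation

/-- Let `F` be a field of characteristic 3 and `Z` a commutative associative unital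
`F`-algebra with an `F`-linear derivation `D` such that the only `D`-invariant ideals of
`Z` are `0` and `Z`.  Then every proper ideal of `Z` consists of elements whose cube is
zero. -/
theorem proper_ideal_cubes_vanish
    {F : Type*} [Field F] [CharP F 3]
    {Z : Type*} [CommRing Z] [Algebra F Z]
    (D : Z →ₗ[F] Z)
    (hD : ∀ a b : Z, D (a * b) = D a * b + a * D b)
    (hsimple : ∀ I : Ideal Z, (∀ x ∈ I, D x ∈ I) → I = ⊥ ∨ I = ⊤) :
    ∀ I : Ideal Z, I ≠ ⊤ → ∀ a ∈ I, a ^ 3 = 0 := by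
  intro I hI a ha
  let D' : Derivation F Z Z := .mk' D fun a b ↦ by rw [hD, smul_eq_mul, smul_eq_mul]; ring
  exact D'.eq_zero_of_map_eq_zero_of_mem hsimple hI (I.pow_mem_of_mem ha 3 three_pos)
    (D'.map_pow_char_eq_zero 3 a)
end

section
/- Let φ be a nontrivial δ-derivation of V = V_{1/2}(Z,D), i.e. δ ∉ {0,1} and φ does not belong to the centroid of V. Then δ = 1/2 and there exists z ∈ Z with z ∉ F·1 (equivalently, D(z) ≠ 0) such that φ(a,b) = (za, zb) for all (a,b) ∈ V. -/
/-!
Let `e = (1, 0)` and `r = (φ e).1`. Since `e` acts as `1` on `Z × 0` and as `1/2` on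
`0 × Z`, the identity `e · e = e` gives `r = 2δ r`, and the δ-derivation rule for `x · e`
then forces the diagonal blocks of `φ` to be multiplication by `r`. The block
`Z × 0 → 0 × Z` vanishes because `(a, 0)` and `(0, b)` commute: its values `u` satisfy
`D(u) b = u D(b)`, so `u ∈ ker D = F·1`, and `u = c·1` with `c ≠ 0` would force `D = 0`.
The block `0 × Z → Z × 0` then vanishes by evaluating the rule on `(b, 0) · (0, 1)`.
So `φ` is multiplication by `r`; this lies in the centroid when `D r = 0`, hence
`D r ≠ 0`, so `r ≠ 0`, and `r = 2δ r` gives `δ = 1/2`.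
-/

/-- The product of the Jordan superalgebra `V_{1/2}(Z,D)` on `Z × Z`
(even part `Z × 0`, odd part `0 × Z`):
`(a,b)·(c,d) = (ac + D(b)d − bD(d), (1/2)(ad + bc))`. -/
def vmul {F : Type*} [Field F] {Z : Type*} [CommRing Z] [Algebra F Z]
    (D : Z →ₗ[F] Z) (x y : Z × Z) : Z × Z :=
  (x.1 * y.1 + D x.2 * y.2 - x.2 * D y.2, (1 / 2 : F) • (x.1 * y.2 + x.2 * y.1))

/-- `φ` is an odd `δ`-superderivation of `V_{1/2}(Z,D)`: it interchanges the even and the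
odd part, and for homogeneous `x, y` it satisfies
`φ(x·y) = δ(φ(x)·y + (−1)^{p(x)} x·φ(y))`. -/
def IsOddSuperDer {F : Type*} [Field F] {Z : Type*} [CommRing Z] [Algebra F Z]
    (D : Z →ₗ[F] Z) (δ : F) (φ : Z × Z → Z × Z) : Prop :=
  (∀ a : Z, (φ (a, 0)).1 = 0) ∧ (∀ b : Z, (φ (0, b)).2 = 0) ∧
  (∀ x y : Z × Z, x.2 = 0 → (y.1 = 0 ∨ y.2 = 0) →
    φ (vmul D x y) = δ • (vmul D (φ x) y + vmul D x (φ y))) ∧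
  (∀ x y : Z × Z, x.1 = 0 → (y.1 = 0 ∨ y.2 = 0) →
    φ (vmul D x y) = δ • (vmul D (φ x) y - vmul D x (φ y)))

/-- `χ` lies in the centroid of `V_{1/2}(Z,D)`:
`χ(x·y) = χ(x)·y = x·χ(y)` for all `x, y`. -/
def InCentroid {F : Type*} [Field F] {Z : Type*} [CommRing Z] [Algebra F Z]
    (D : Z →ₗ[F] Z) (χ : Z × Z → Z × Z) : Prop :=
  ∀ x y : Z × Z, χ (vmul D x y) = vmul D (χ x) y ∧ χ (vmul D x y) = vmul D x (χ y)

/-- `χ` lies in the odd part of the supercentroid of `V_{1/2}(Z,D)`: it is odd and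
`χ(x·y) = χ(x)·y = (−1)^{p(x)} x·χ(y)` for all homogeneous `x, y`. -/
def InOddSupercentroid {F : Type*} [Field F] {Z : Type*} [CommRing Z] [Algebra F Z]
    (D : Z →ₗ[F] Z) (χ : Z × Z → Z × Z) : Prop :=
  (∀ a : Z, (χ (a, 0)).1 = 0) ∧ (∀ b : Z, (χ (0, b)).2 = 0) ∧
  (∀ x y : Z × Z, (x.1 = 0 ∨ x.2 = 0) → (y.1 = 0 ∨ y.2 = 0) →
    χ (vmul D x y) = vmul D (χ x) y) ∧
  (∀ x y : Z × Z, x.2 = 0 → (y.1 = 0 ∨ y.2 = 0) →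
    χ (vmul D x y) = vmul D x (χ y)) ∧
  (∀ x y : Z × Z, x.1 = 0 → (y.1 = 0 ∨ y.2 = 0) →
    χ (vmul D x y) = - vmul D x (χ y))

theorem eq_of_eq_smul_add {F M : Type*} [Field F] [AddCommGroup M] [Module F M] {δ : F}
    (hδ : δ ≠ 1) {u v : M} (hv : v = (2 * δ) • v) (hu : u = δ • (u + v)) : u = v := by
  have h : (1 - δ) • (u - v) = 0 := by linear_combination (norm := module) hu - hv
  exact sub_eq_zero.mp ((smul_eq_zero.mp h).resolve_left (sub_ne_zero.mpr hδ.symm))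

theorem LinearMap.apply_zero_mk_smul {R M : Type*} [Semiring R] [AddCommMonoid M] [Module R M]
    (φ : M × M →ₗ[R] M × M) (c : R) (b : M) : φ (0, c • b) = c • φ (0, b) := by
  rw [← map_smul, Prod.smul_mk, smul_zero]

section Leibniz

variable {R A : Type*} [CommSemiring R] [CommRing A] [Algebra R A] {D : A →ₗ[R] A}

theorem LinearMap.map_algebraMap_of_leibniz (hD : ∀ a b : A, D (a * b) = D a * b + a * D b)
    (c : R) : D (algebraMap R A c) = 0 :=
  (Derivation.mk' D fun a b => by
    rw [hD, smul_eq_mul, smul_eq_mul, add_comm, mul_comm b]).map_algebraMap c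

theorem LinearMap.map_one_eq_zero_of_leibniz (hD : ∀ a b : A, D (a * b) = D a * b + a * D b) :
    D 1 = 0 := by
  simpa using D.map_algebraMap_of_leibniz hD 1

end Leibniz

section

variable {F : Type*} [Field F] {Z : Type*} [CommRing Z] [Algebra F Z] {D : Z →ₗ[F] Z}

theorem eq_zero_of_forall_map_mul_eq_mul_map (hD : ∀ a b : Z, D (a * b) = D a * b + a * D b)
    (hD0 : D ≠ 0) (hker : ∀ a : Z, D a = 0 → ∃ c : F, a = algebraMap F Z c) {u : Z}
    (hu : ∀ b, D u * b = u * D b) : u = 0 := by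
  obtain ⟨c, rfl⟩ := hker u (by simpa [D.map_one_eq_zero_of_leibniz hD] using hu 1)
  obtain rfl : c = 0 := by
    by_contra hc
    refine hD0 (LinearMap.ext fun b => ?_)
    have hb := hu b
    rw [D.map_algebraMap_of_leibniz hD, zero_mul, ← Algebra.smul_def, eq_comm] at hb
    exact (smul_eq_zero.mp hb).resolve_left hc
  exact map_zero _

theorem inCentroid_mul (hD : ∀ a b : Z, D (a * b) = D a * b + a * D b) {r : Z} (hr : D r = 0) :
    InCentroid D fun x => (r * x.1, r * x.2) := by
  intro x y
  simp only [vmul, hD, hr, Prod.ext_iff, Algebra.smul_def]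
  exact ⟨⟨by ring, by ring⟩, by ring, by ring⟩

variable (D) in
def IsDeltaDerivation (δ : F) (φ : Z × Z →ₗ[F] Z × Z) : Prop :=
  ∀ x y : Z × Z, φ (vmul D x y) = δ • (vmul D (φ x) y + vmul D x (φ y))

end

namespace IsDeltaDerivation

variable {F : Type*} [Field F] {Z : Type*} [CommRing Z] [Algebra F Z] {D : Z →ₗ[F] Z} {δ : F}
  {φ : Z × Z →ₗ[F] Z × Z}

theorem fst_apply_one_zero (hφ : IsDeltaDerivation D δ φ) :
    (φ (1, 0)).1 = (2 * δ) • (φ (1, 0)).1 := by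
  have h : (φ (1, 0)).1 = δ • ((φ (1, 0)).1 + (φ (1, 0)).1) := by
    simpa [vmul] using congrArg Prod.fst (hφ (1, 0) (1, 0))
  linear_combination (norm := module) h

theorem fst_apply_mk_zero (hφ : IsDeltaDerivation D δ φ) (hδ1 : δ ≠ 1) (a : Z) :
    (φ (a, 0)).1 = (φ (1, 0)).1 * a := by
  have h : (φ (a, 0)).1 = δ • ((φ (a, 0)).1 + (φ (1, 0)).1 * a) := by
    simpa [vmul, mul_comm a] using congrArg Prod.fst (hφ (a, 0) (1, 0))
  refine eq_of_eq_smul_add hδ1 ?_ h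
  rw [← smul_mul_assoc, ← hφ.fst_apply_one_zero]

theorem snd_apply_zero_mk (hφ : IsDeltaDerivation D δ φ) (h2 : (2 : F) ≠ 0) (hδ1 : δ ≠ 1)
    (b : Z) : (φ (0, b)).2 = (φ (1, 0)).1 * b := by
  have h : (2⁻¹ : F) • (φ (0, b)).2 =
      (2⁻¹ : F) • δ • ((φ (0, b)).2 + (φ (1, 0)).1 * b) := by
    simpa [vmul, LinearMap.apply_zero_mk_smul, smul_comm δ, mul_comm b] using
      congrArg Prod.snd (hφ (0, b) (1, 0))
  refine eq_of_eq_smul_add hδ1 ?_ (smul_right_injective Z (inv_ne_zero h2) h)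
  rw [← smul_mul_assoc, ← hφ.fst_apply_one_zero]

theorem map_snd_apply_mk_zero_mul (hφ : IsDeltaDerivation D δ φ) (h2 : (2 : F) ≠ 0)
    (hδ0 : δ ≠ 0) (a b : Z) : D (φ (a, 0)).2 * b = (φ (a, 0)).2 * D b := by
  have hcomm : vmul D (a, 0) (0, b) = vmul D (0, b) (a, 0) := by simp [vmul, mul_comm]
  have h : δ • ((φ (0, b)).1 * a + (D b * (φ (a, 0)).2 - b * D (φ (a, 0)).2)) =
      δ • (D (φ (a, 0)).2 * b - (φ (a, 0)).2 * D b + a * (φ (0, b)).1) := by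
    have hab := hφ (a, 0) (0, b)
    rw [hcomm, hφ] at hab
    simpa [vmul, smul_add] using congrArg Prod.fst hab
  have h0 : D (φ (a, 0)).2 * b - (φ (a, 0)).2 * D b +
      (D (φ (a, 0)).2 * b - (φ (a, 0)).2 * D b) = 0 := by
    linear_combination -smul_right_injective Z hδ0 h
  rw [← two_smul F, smul_eq_zero, sub_eq_zero] at h0
  exact h0.resolve_left h2

theorem snd_apply_mk_zero (hφ : IsDeltaDerivation D δ φ) (h2 : (2 : F) ≠ 0)
    (hδ0 : δ ≠ 0) (hD : ∀ a b : Z, D (a * b) = D a * b + a * D b) (hD0 : D ≠ 0)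
    (hker : ∀ a : Z, D a = 0 → ∃ c : F, a = algebraMap F Z c) (a : Z) :
    (φ (a, 0)).2 = 0 :=
  eq_zero_of_forall_map_mul_eq_mul_map hD hD0 hker (hφ.map_snd_apply_mk_zero_mul h2 hδ0 a)

theorem fst_apply_zero_one (hφ : IsDeltaDerivation D δ φ) (h2 : (2 : F) ≠ 0)
    (hδ0 : δ ≠ 0) : (φ (0, 1)).1 = 0 := by
  have h : δ • ((2⁻¹ : F) • (φ (0, 1)).1 + (2⁻¹ : F) • (φ (0, 1)).1) = 0 := by
    simpa [vmul, Prod.mk_zero_zero, eq_comm] using congrArg Prod.snd (hφ (0, 1) (0, 1))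
  rw [← add_smul, ← two_mul, mul_inv_cancel₀ h2, one_smul, smul_eq_zero] at h
  exact h.resolve_left hδ0

theorem fst_apply_zero_mk (hφ : IsDeltaDerivation D δ φ) (h2 : (2 : F) ≠ 0)
    (hδ0 : δ ≠ 0) (hD : ∀ a b : Z, D (a * b) = D a * b + a * D b) (hD0 : D ≠ 0)
    (hker : ∀ a : Z, D a = 0 → ∃ c : F, a = algebraMap F Z c) (b : Z) :
    (φ (0, b)).1 = 0 := by
  simpa [vmul, LinearMap.apply_zero_mk_smul, hφ.snd_apply_mk_zero h2 hδ0 hD hD0 hker,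
    hφ.fst_apply_zero_one h2 hδ0, h2] using congrArg Prod.fst (hφ (b, 0) (0, 1))

theorem apply_eq_mul (hφ : IsDeltaDerivation D δ φ) (h2 : (2 : F) ≠ 0) (hδ0 : δ ≠ 0)
    (hδ1 : δ ≠ 1) (hD : ∀ a b : Z, D (a * b) = D a * b + a * D b) (hD0 : D ≠ 0)
    (hker : ∀ a : Z, D a = 0 → ∃ c : F, a = algebraMap F Z c) (a b : Z) :
    φ (a, b) = ((φ (1, 0)).1 * a, (φ (1, 0)).1 * b) := by
  rw [← add_zero a, ← zero_add b, ← Prod.mk_add_mk, map_add, add_zero, zero_add]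
  ext
  · rw [Prod.fst_add, hφ.fst_apply_mk_zero hδ1, hφ.fst_apply_zero_mk h2 hδ0 hD hD0 hker,
      add_zero]
  · rw [Prod.snd_add, hφ.snd_apply_mk_zero h2 hδ0 hD hD0 hker, hφ.snd_apply_zero_mk h2 hδ1,
      zero_add]

end IsDeltaDerivation

theorem nontrivial_delta_derivation_of_V_general
    {F : Type*} [Field F] (h2 : (2 : F) ≠ 0)
    {Z : Type*} [CommRing Z] [Algebra F Z]
(D : Z →ₗ[F] Z)
    (hD : ∀ a b : Z, D (a * b) = D a * b + a * D b)
    (hD0 : D ≠ 0)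
    (hker : ∀ a : Z, D a = 0 → ∃ c : F, a = algebraMap F Z c)
    (δ : F) (hδ0 : δ ≠ 0) (hδ1 : δ ≠ 1)
    (φ : Z × Z →ₗ[F] Z × Z)
    (hder : ∀ x y : Z × Z, φ (vmul D x y) = δ • (vmul D (φ x) y + vmul D x (φ y)))
    (hnt : ¬ InCentroid D ⇑φ) :
    δ = 1 / 2 ∧
    ∃ z : Z, (∀ c : F, z ≠ algebraMap F Z c) ∧ D z ≠ 0 ∧
      ∀ a b : Z, φ (a, b) = (z * a, z * b) := by
  have hφ := IsDeltaDerivation.apply_eq_mul hder h2 hδ0 hδ1 hD hD0 hker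
  set r := (φ (1, 0)).1
  have hDr : D r ≠ 0 := fun hr =>
    hnt (by convert inCentroid_mul hD hr using 1; funext ⟨a, b⟩; exact hφ a b)
  have hr0 : r ≠ 0 := fun hr => hDr (by rw [hr, map_zero])
  have hδ : (2 * δ - 1) • r = 0 := by
    rw [sub_smul, one_smul, ← IsDeltaDerivation.fst_apply_one_zero hder, sub_self]
  refine ⟨?_, r, fun c hc => hDr (by rw [hc, D.map_algebraMap_of_leibniz hD]), hDr, hφ⟩
  rw [eq_div_iff h2]
  linear_combination (smul_eq_zero.mp hδ).resolve_right hr0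

/-- (char F ≠ 2)  A nontrivial `δ`-derivation `φ` of `V_{1/2}(Z,D)` (i.e. `δ ∉ {0,1}`
and `φ` is not in the centroid) occurs only for `δ = 1/2`, and then `φ(a,b) = (za, zb)`
for some fixed `z ∈ Z` with `z ∉ F·1` (equivalently, `D z ≠ 0`). -/
theorem nontrivial_delta_derivation_of_V
    {F : Type*} [Field F] (h2 : (2 : F) ≠ 0)
    {Z : Type*} [CommRing Z] [Algebra F Z]
(D : Z →ₗ[F] Z)
    (hD : ∀ a b : Z, D (a * b) = D a * b + a * D b)
    (hD0 : D ≠ 0)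
    (hsimple : ∀ I : Ideal Z, (∀ x ∈ I, D x ∈ I) → I = ⊥ ∨ I = ⊤)
    (hker : ∀ a : Z, D a = 0 → ∃ c : F, a = algebraMap F Z c)
    (δ : F) (hδ0 : δ ≠ 0) (hδ1 : δ ≠ 1)
    (φ : Z × Z →ₗ[F] Z × Z)
    (hder : ∀ x y : Z × Z, φ (vmul D x y) = δ • (vmul D (φ x) y + vmul D x (φ y)))
    (hnt : ¬ InCentroid D ⇑φ) :
    δ = 1 / 2 ∧
    ∃ z : Z, (∀ c : F, z ≠ algebraMap F Z c) ∧ D z ≠ 0 ∧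
      ∀ a b : Z, φ (a, b) = (z * a, z * b) :=
  nontrivial_delta_derivation_of_V_general h2 D hD hD0 hker δ hδ0 hδ1 φ hder hnt
end
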